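/- Assume A → B has semifree differential module with semifree basis {u_λ}_{λ∈Λ} of Ω and structure constants c_{μλ} (∂^Ω(u_λ) = Σ_{μ<λ} u_μ c_{μλ}), and let ∂_λ ∈ Der_A(B) be the dual derivations determined via the isomorphism g : Der_A(B) ≅ Hom_B(Ω,B) by g(∂_λ)(u_μ) = 1 if λ = μ and 0 otherwise. Then: (a) for all λ, ∂^Der(∂_λ) = (−1)^{|u_λ|+1} Σ_{υ>λ} c_{λυ} ∂_υ (a convergent, possibly infinite, sum); and (b) for all b ∈ B, δ̄(b) = Σ_λ u_λ ∂_λ(b) (a finite sum), where δ̄ : B → Ω is the derivation induced by the universal derivation δ. -/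

import Mathlib

/- ------------------------------------------------------------------
A self-contained framework for differential graded (DG) homological
algebra, following Nasseh–Ono–Yoshino, "Connections and naïve lifting
of DG modules".
------------------------------------------------------------------ -/

noncomputable section

namespace DG

universe u

/-- The sign `(-1)^n` for `n : ℤ`. -/
def sgn (n : ℤ) : ℤ := ((-1 : ℤˣ) ^ n : ℤˣ)

/-- A (non-negatively graded, strictly graded-commutative) DG `R`-algebra:
a graded `R`-algebra `A = ⊕_{n ≥ 0} A_n` with `ab = (-1)^{|a||b|} ba`,
`a² = 0` for `|a|` odd, and a degree `-1` differential `d` with `d ∘ d = 0`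
satisfying the Leibniz rule. -/
structure DGAlg (R : Type u) [CommRing R] : Type (u + 1) where
  carrier : Type u
  [ring : Ring carrier]
  [alg : Algebra R carrier]
  gr : ℤ → Submodule R carrier
  internal : DirectSum.IsInternal gr
  nonneg : ∀ i : ℤ, i < 0 → gr i = ⊥
  one_mem : (1 : carrier) ∈ gr 0
  mul_mem : ∀ {i j : ℤ} {a b : carrier}, a ∈ gr i → b ∈ gr j → a * b ∈ gr (i + j)
  gcomm : ∀ {i j : ℤ} {a b : carrier}, a ∈ gr i → b ∈ gr j → a * b = sgn (i * j) • (b * a)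
  sq_zero : ∀ {i : ℤ} {a : carrier}, a ∈ gr i → Odd i → a * a = 0
  d : carrier →ₗ[R] carrier
  d_mem : ∀ {i : ℤ} {a : carrier}, a ∈ gr i → d a ∈ gr (i - 1)
  d_d : ∀ a : carrier, d (d a) = 0
  leibniz : ∀ {i : ℤ} {a : carrier} (b : carrier), a ∈ gr i →
    d (a * b) = d a * b + sgn i • (a * d b)

attribute [instance] DGAlg.ring DGAlg.alg

variable {R : Type u} [CommRing R]

/-- A right DG module over a DG `R`-algebra `S`. -/
structure DGMod (S : DGAlg R) : Type (u + 1) where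
  carrier : Type u
  [acg : AddCommGroup carrier]
  [mod : Module R carrier]
  /-- the right `S`-action -/
  smul : carrier → S.carrier → carrier
  smul_add : ∀ (m : carrier) (a b : S.carrier), smul m (a + b) = smul m a + smul m b
  add_smul : ∀ (m n : carrier) (a : S.carrier), smul (m + n) a = smul m a + smul n a
  smul_rsmul : ∀ (r : R) (m : carrier) (a : S.carrier), smul (r • m) a = r • smul m a
  smul_one : ∀ m : carrier, smul m 1 = m
  smul_mul : ∀ (m : carrier) (a b : S.carrier), smul m (a * b) = smul (smul m a) b
  smul_algebraMap : ∀ (r : R) (m : carrier), smul m (algebraMap R S.carrier r) = r • m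
  gr : ℤ → Submodule R carrier
  internal : DirectSum.IsInternal gr
  smul_mem : ∀ {i j : ℤ} {m : carrier} {a : S.carrier},
    m ∈ gr i → a ∈ S.gr j → smul m a ∈ gr (i + j)
  d : carrier →ₗ[R] carrier
  d_mem : ∀ {i : ℤ} {m : carrier}, m ∈ gr i → d m ∈ gr (i - 1)
  d_d : ∀ m : carrier, d (d m) = 0
  leibniz : ∀ {i : ℤ} {m : carrier} (a : S.carrier), m ∈ gr i →
    d (smul m a) = smul (d m) a + sgn i • smul m (S.d a)

attribute [instance] DGMod.acg DGMod.mod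

/-- Decomposition of a DG algebra into its homogeneous components. -/
noncomputable def DGAlg.dec (S : DGAlg R) : S.carrier ≃ DirectSum ℤ (fun i => S.gr i) :=
  (Equiv.ofBijective _ S.internal).symm

/-- Decomposition of a DG module into its homogeneous components. -/
noncomputable def DGMod.dec {S : DGAlg R} (M : DGMod S) :
    M.carrier ≃ DirectSum ℤ (fun i => M.gr i) :=
  (Equiv.ofBijective _ M.internal).symm

/-- The left action `a • x := (-1)^{|a||x|} x a` on a right DG module over the
strictly graded-commutative DG algebra `S`, extended bilinearly. -/
noncomputable def DGMod.lsmul {S : DGAlg R} (M : DGMod S) (a : S.carrier) (x : M.carrier) :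
    M.carrier :=
  (DFinsupp.sumAddHom (fun i => AddMonoidHom.mk'
    (fun ai : S.gr i => DFinsupp.sumAddHom (fun j => AddMonoidHom.mk'
      (fun xj : M.gr j => sgn (i * j) • M.smul (xj : M.carrier) (ai : S.carrier))
      (by intro x y; simp [M.add_smul, smul_add]))
    )
    (by
      intro ai ai'
      refine DFinsupp.addHom_ext fun j xj => ?_
      simp [DFinsupp.sumAddHom_single, M.smul_add, smul_add]))
    (S.dec a)) (M.dec x)

/-- `f : M → N` is a graded `S`-linear map of degree `n`. -/
def IsGLin {S : DGAlg R} (M N : DGMod S) (n : ℤ) (f : M.carrier → N.carrier) : Prop :=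
  (∀ x y : M.carrier, f (x + y) = f x + f y) ∧
  (∀ (r : R) (x : M.carrier), f (r • x) = r • f x) ∧
  (∀ (x : M.carrier) (a : S.carrier), f (M.smul x a) = N.smul (f x) a) ∧
  (∀ i : ℤ, ∀ x ∈ M.gr i, f x ∈ N.gr (i + n))

/-- `f` belongs to `Hom_S(M,N) = ⊕_{n ∈ ℤ} Hom_{gr(S)}(M, N(n))`, i.e. `f` is a finite
sum of homogeneous graded `S`-linear maps. -/
def InSHom {S : DGAlg R} (M N : DGMod S) (f : M.carrier → N.carrier) : Prop :=
  ∃ (s : Finset ℤ) (g : ℤ → M.carrier → N.carrier),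
    (∀ n ∈ s, IsGLin M N n (g n)) ∧ ∀ x, f x = ∑ n ∈ s, g n x

/-- A homomorphism of DG `R`-algebras. -/
structure DGHom (S T : DGAlg R) : Type u where
  toFun : S.carrier → T.carrier
  map_one : toFun 1 = 1
  map_mul : ∀ a b, toFun (a * b) = toFun a * toFun b
  map_add : ∀ a b, toFun (a + b) = toFun a + toFun b
  map_algebraMap : ∀ r : R, toFun (algebraMap R S.carrier r) = algebraMap R T.carrier r
  map_gr : ∀ {i : ℤ} {a : S.carrier}, a ∈ S.gr i → toFun a ∈ T.gr i
  map_d : ∀ a, toFun (S.d a) = T.d (toFun a)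

/-- The underlying ring homomorphism of a DG algebra homomorphism. -/
def DGHom.toRingHom {S T : DGAlg R} (f : DGHom S T) : S.carrier →+* T.carrier where
  toFun := f.toFun
  map_one' := f.map_one
  map_mul' := f.map_mul
  map_zero' := by
    have h := f.map_add 0 0
    rw [add_zero] at h
    exact (add_eq_left.mp h.symm)
  map_add' := f.map_add

/-- The basic setup of the paper: a DG `R`-algebra homomorphism `φ : A → B` with `B`
projective as an underlying (graded) `A`-module, together with the enveloping DG algebra
`E = Bᵉ = B ⊗_A B` (axiomatized by its structure maps `inl : b ↦ b ⊗ 1`,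
`inr : b ↦ 1 ⊗ b`, the multiplication map `mulB = π_B : Bᵉ → B` and the universal
property of the tensor product), the diagonal ideal `J = ker π_B` (a DG `Bᵉ`-module
with structure monomorphism `ιJ`), and the universal derivation
`δ : B → J`, `δ(b) = b ⊗ 1 - 1 ⊗ b`. -/
structure EnvSetup (R : Type u) [CommRing R] : Type (u + 1) where
  A : DGAlg R
  B : DGAlg R
  φ : DGHom A B
  projB :
    letI : Module A.carrier B.carrier := Module.compHom B.carrier φ.toRingHom
    Module.Projective A.carrier B.carrier
  E : DGAlg R
  inl : DGHom B E
  inr : DGHom B E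
  inl_inr_phi : ∀ a : A.carrier, inl.toFun (φ.toFun a) = inr.toFun (φ.toFun a)
  mulB : DGHom E B
  mulB_inl : ∀ b, mulB.toFun (inl.toFun b) = b
  mulB_inr : ∀ b, mulB.toFun (inr.toFun b) = b
  span : ∀ x : E.carrier,
    x ∈ Submodule.span R {y : E.carrier | ∃ b b', y = inl.toFun b * inr.toFun b'}
  univ : ∀ (Q : Type u) [AddCommGroup Q] [Module R Q] (h : B.carrier → B.carrier → Q),
    (∀ b₁ b₂ b', h (b₁ + b₂) b' = h b₁ b' + h b₂ b') →
    (∀ b b₁ b₂, h b (b₁ + b₂) = h b b₁ + h b b₂) →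
    (∀ (r : R) b b', h (r • b) b' = r • h b b') →
    (∀ (r : R) b b', h b (r • b') = r • h b b') →
    (∀ (a : A.carrier) (b b' : B.carrier), h (b * φ.toFun a) b' = h b (φ.toFun a * b')) →
    ∃! H : E.carrier →ₗ[R] Q, ∀ b b', H (inl.toFun b * inr.toFun b') = h b b'
  J : DGMod E
  ιJ : J.carrier → E.carrier
  ιJ_add : ∀ x y, ιJ (x + y) = ιJ x + ιJ y
  ιJ_rsmul : ∀ (r : R) x, ιJ (r • x) = r • ιJ x
  ιJ_smul : ∀ x e, ιJ (J.smul x e) = ιJ x * e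
  ιJ_gr : ∀ (i : ℤ) (x : J.carrier), x ∈ J.gr i ↔ ιJ x ∈ E.gr i
  ιJ_d : ∀ x, ιJ (J.d x) = E.d (ιJ x)
  ιJ_inj : Function.Injective ιJ
  ιJ_range : ∀ e : E.carrier, (∃ x, ιJ x = e) ↔ mulB.toFun e = 0
  δ : B.carrier → J.carrier
  ιJ_δ : ∀ b, ιJ (δ b) = inl.toFun b - inr.toFun b

/-- `D : B → X` is an `A`-derivation of degree `n` with values in the DG `Bᵉ`-module `X`:
an `A`-linear graded map of degree `n` satisfying the Leibniz rule
`D(bc) = D(b)·(1⊗c) + (-1)^{|b||c|} D(c)·(b⊗1)`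
(equivalently, `D(bc) = D(b)c + (-1)^{|D||b|} b D(c)`). -/
def IsDer (P : EnvSetup R) (X : DGMod P.E) (n : ℤ) (D : P.B.carrier → X.carrier) : Prop :=
  (∀ b c, D (b + c) = D b + D c) ∧
  (∀ (r : R) b, D (r • b) = r • D b) ∧
  (∀ (b : P.B.carrier) (a : P.A.carrier),
    D (b * P.φ.toFun a) = X.smul (D b) (P.inr.toFun (P.φ.toFun a))) ∧
  (∀ i : ℤ, ∀ b ∈ P.B.gr i, D b ∈ X.gr (i + n)) ∧
  (∀ (i j : ℤ) (b c : P.B.carrier), b ∈ P.B.gr i → c ∈ P.B.gr j →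
    D (b * c) = X.smul (D b) (P.inr.toFun c) + sgn (i * j) • X.smul (D c) (P.inl.toFun b))

/-- `D` belongs to `Der_A(B,X) = ⊕_{n ∈ ℤ} Der_A(B,X)_n`. -/
def InSDer (P : EnvSetup R) (X : DGMod P.E) (D : P.B.carrier → X.carrier) : Prop :=
  ∃ (s : Finset ℤ) (g : ℤ → P.B.carrier → X.carrier),
    (∀ n ∈ s, IsDer P X n (g n)) ∧ ∀ b, D b = ∑ n ∈ s, g n b

end DG
/- Part 2 appended to common -/
namespace DG

variable {R : Type u} [CommRing R]

/-- The DG tensor product `N ⊗_B X` of a DG `B`-module `N` and a DG `Bᵉ`-module `X`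
(a DG `B`-module via the right `B`-action on `X` through `inr`), axiomatized by its
structure map `t : (n,x) ↦ n ⊗ x`, `B`-balancedness `nb ⊗ x = (-1)^{|b||x|} n ⊗ x·(b⊗1)`,
spanning, and the universal property. -/
structure TensorBX (P : EnvSetup R) (N : DGMod P.B) (X : DGMod P.E) : Type (u + 1) where
  T : DGMod P.B
  t : N.carrier → X.carrier → T.carrier
  t_addl : ∀ m m' x, t (m + m') x = t m x + t m' x
  t_addr : ∀ m x x', t m (x + x') = t m x + t m x'
  t_rsml : ∀ (r : R) m x, t (r • m) x = r • t m x
  t_rsmr : ∀ (r : R) m x, t m (r • x) = r • t m x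
  t_smul : ∀ m x b, t m (X.smul x (P.inr.toFun b)) = T.smul (t m x) b
  t_bal : ∀ {i j : ℤ} (m : N.carrier) (x : X.carrier) (b : P.B.carrier),
    b ∈ P.B.gr i → x ∈ X.gr j →
    t (N.smul m b) x = sgn (i * j) • t m (X.smul x (P.inl.toFun b))
  t_gr : ∀ {i j : ℤ} {m x}, m ∈ N.gr i → x ∈ X.gr j → t m x ∈ T.gr (i + j)
  t_d : ∀ {i : ℤ} (m x), m ∈ N.gr i → T.d (t m x) = t (N.d m) x + sgn i • t m (X.d x)
  span : ∀ y : T.carrier, y ∈ Submodule.span R {z : T.carrier | ∃ m x, z = t m x}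
  univ : ∀ (Q : Type u) [AddCommGroup Q] [Module R Q] (h : N.carrier → X.carrier → Q),
    (∀ m m' x, h (m + m') x = h m x + h m' x) →
    (∀ m x x', h m (x + x') = h m x + h m x') →
    (∀ (r : R) m x, h (r • m) x = r • h m x) →
    (∀ (r : R) m x, h m (r • x) = r • h m x) →
    (∀ {i j : ℤ} (m x) (b : P.B.carrier), b ∈ P.B.gr i → x ∈ X.gr j →
      h (N.smul m b) x = sgn (i * j) • h m (X.smul x (P.inl.toFun b))) →
    ∃! H : T.carrier →ₗ[R] Q, ∀ m x, H (t m x) = h m x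

/-- `ψ : N → N ⊗_B X` is a `D`-connection on `N` along `X` of degree `n = |D|`:
a graded `A`-linear map of degree `n` with
`ψ(xb) = ψ(x)b + (-1)^{|D||x|} x ⊗ D(b)`. -/
def IsConn {P : EnvSetup R} {N : DGMod P.B} {X : DGMod P.E} (τ : TensorBX P N X)
    (n : ℤ) (D : P.B.carrier → X.carrier) (ψ : N.carrier → τ.T.carrier) : Prop :=
  (∀ x y : N.carrier, ψ (x + y) = ψ x + ψ y) ∧
  (∀ (r : R) (x : N.carrier), ψ (r • x) = r • ψ x) ∧
  (∀ i : ℤ, ∀ x ∈ N.gr i, ψ x ∈ τ.T.gr (i + n)) ∧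
  (∀ (i : ℤ) (x : N.carrier) (b : P.B.carrier), x ∈ N.gr i →
    ψ (N.smul x b) = τ.T.smul (ψ x) b + sgn (n * i) • τ.t x (D b))

/-- `ψ` belongs to `Conn(N, N ⊗_B X) = ⊕_{n ∈ ℤ} Conn(N, N ⊗_B X)_n`. -/
def InSConn {P : EnvSetup R} {N : DGMod P.B} {X : DGMod P.E} (τ : TensorBX P N X)
    (ψ : N.carrier → τ.T.carrier) : Prop :=
  ∃ (s : Finset ℤ) (g : ℤ → N.carrier → τ.T.carrier) (Df : ℤ → P.B.carrier → X.carrier),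
    (∀ n ∈ s, IsDer P X n (Df n) ∧ IsConn τ n (Df n) (g n)) ∧ ∀ x, ψ x = ∑ n ∈ s, g n x

/-- An `Der_A(B,X)`-connection on `N` (along the `Bᵉ`-module `X`): a DG `B`-module
homomorphism `∇ : Der_A(B,X) → Conn(N, N ⊗_B X)` such that `∇_D` is a `D`-connection
for every `D`.  (Equivalently, a DG `B`-module splitting of `ν`.) -/
def IsLConn {P : EnvSetup R} {N : DGMod P.B} {X : DGMod P.E} (τ : TensorBX P N X)
    (Cn : (P.B.carrier → X.carrier) → N.carrier → τ.T.carrier) : Prop :=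
  (∀ (n : ℤ) (D), IsDer P X n D → IsConn τ n D (Cn D)) ∧
  (∀ D D', InSDer P X D → InSDer P X D' →
    ∀ x, Cn (fun b => D b + D' b) x = Cn D x + Cn D' x) ∧
  (∀ (r : R) (D), InSDer P X D → ∀ x, Cn (fun b => r • D b) x = r • Cn D x) ∧
  (∀ (k n : ℤ) (b : P.B.carrier) (D), b ∈ P.B.gr k → IsDer P X n D →
    ∀ x, Cn (fun c => X.lsmul (P.inl.toFun b) (D c)) x = τ.T.lsmul b (Cn D x)) ∧
  (∀ (n : ℤ) (D), IsDer P X n D →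
    ∀ x, Cn (fun b => X.d (D b) - sgn n • D (P.B.d b)) x
      = τ.T.d (Cn D x) - sgn n • Cn D (N.d x))

/-- The DG tensor product `N|_A ⊗_A B` (a DG `B`-module through the right factor),
together with the canonical DG `B`-module epimorphism `pr = π_N : N|_A ⊗_A B → N`,
`n ⊗ b ↦ nb`. -/
structure TensorAB (P : EnvSetup R) (N : DGMod P.B) : Type (u + 1) where
  T : DGMod P.B
  t : N.carrier → P.B.carrier → T.carrier
  t_addl : ∀ m m' b, t (m + m') b = t m b + t m' b
  t_addr : ∀ m b b', t m (b + b') = t m b + t m b'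
  t_rsml : ∀ (r : R) m b, t (r • m) b = r • t m b
  t_rsmr : ∀ (r : R) m b, t m (r • b) = r • t m b
  t_smul : ∀ m b b', t m (b * b') = T.smul (t m b) b'
  t_bal : ∀ (m : N.carrier) (a : P.A.carrier) (b : P.B.carrier),
    t (N.smul m (P.φ.toFun a)) b = t m (P.φ.toFun a * b)
  t_gr : ∀ {i j : ℤ} {m b}, m ∈ N.gr i → b ∈ P.B.gr j → t m b ∈ T.gr (i + j)
  t_d : ∀ {i : ℤ} (m b), m ∈ N.gr i → T.d (t m b) = t (N.d m) b + sgn i • t m (P.B.d b)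
  span : ∀ y : T.carrier, y ∈ Submodule.span R {z : T.carrier | ∃ m b, z = t m b}
  univ : ∀ (Q : Type u) [AddCommGroup Q] [Module R Q] (h : N.carrier → P.B.carrier → Q),
    (∀ m m' b, h (m + m') b = h m b + h m' b) →
    (∀ m b b', h m (b + b') = h m b + h m b') →
    (∀ (r : R) m b, h (r • m) b = r • h m b) →
    (∀ (r : R) m b, h m (r • b) = r • h m b) →
    (∀ (m : N.carrier) (a : P.A.carrier) (b : P.B.carrier),
      h (N.smul m (P.φ.toFun a)) b = h m (P.φ.toFun a * b)) →
    ∃! H : T.carrier →ₗ[R] Q, ∀ m b, H (t m b) = h m b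
  pr : T.carrier → N.carrier
  pr_add : ∀ y y', pr (y + y') = pr y + pr y'
  pr_rsmul : ∀ (r : R) y, pr (r • y) = r • pr y
  pr_smul : ∀ y b, pr (T.smul y b) = N.smul (pr y) b
  pr_gr : ∀ {i : ℤ} {y}, y ∈ T.gr i → pr y ∈ N.gr i
  pr_d : ∀ y, pr (T.d y) = N.d (pr y)
  pr_t : ∀ m b, pr (t m b) = N.smul m b

/-- `N` is naïvely liftable to `A`: the DG `B`-module epimorphism
`π_N : N|_A ⊗_A B → N` has a right inverse in the category of DG `B`-modules. -/
def NaivelyLiftable {P : EnvSetup R} {N : DGMod P.B} (σ : TensorAB P N) : Prop :=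
  ∃ ρ : N.carrier → σ.T.carrier, IsGLin N σ.T 0 ρ ∧
    (∀ x, σ.T.d (ρ x) = ρ (N.d x)) ∧ ∀ x, σ.pr (ρ x) = x

end DG
/- Part 3 appended to common -/
namespace DG

variable {R : Type u} [CommRing R]

/-- A DG `Bᵉ`-module `X` regarded as a DG `B`-module via `inr : B → Bᵉ`
(e.g. when `XJ = 0`, via `B ≅ Bᵉ/J`). -/
def EnvSetup.toBMod (P : EnvSetup R) (X : DGMod P.E) : DGMod P.B where
  carrier := X.carrier
  acg := X.acg
  mod := X.mod
  smul x b := X.smul x (P.inr.toFun b)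
  smul_add m a b := by simp only [P.inr.map_add, X.smul_add]
  add_smul m n a := by simp only [X.add_smul]
  smul_rsmul r m a := by simp only [X.smul_rsmul]
  smul_one m := by simp only [P.inr.map_one, X.smul_one]
  smul_mul m a b := by simp only [P.inr.map_mul, X.smul_mul]
  smul_algebraMap r m := by simp only [P.inr.map_algebraMap, X.smul_algebraMap]
  gr := X.gr
  internal := X.internal
  smul_mem h1 h2 := X.smul_mem h1 (P.inr.map_gr h2)
  d := X.d
  d_mem := X.d_mem
  d_d := X.d_d
  leibniz a h := by
    simp only [P.inr.map_d]
    exact X.leibniz (P.inr.toFun a) h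

/-- A DG algebra `S` regarded as a DG module over itself. -/
def DGAlg.toSelfMod (S : DGAlg R) : DGMod S where
  carrier := S.carrier
  smul a b := a * b
  smul_add := mul_add
  add_smul := add_mul
  smul_rsmul r m a := smul_mul_assoc r m a
  smul_one := mul_one
  smul_mul m a b := (mul_assoc m a b).symm
  smul_algebraMap r m := by rw [Algebra.smul_def, Algebra.commutes]
  gr := S.gr
  internal := S.internal
  smul_mem := S.mul_mem
  d := S.d
  d_mem := S.d_mem
  d_d := S.d_d
  leibniz := S.leibniz

/-- The DG tensor product `N ⊗_B X` of two DG `B`-modules. -/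
structure TensorBB (P : EnvSetup R) (N X : DGMod P.B) : Type (u + 1) where
  T : DGMod P.B
  t : N.carrier → X.carrier → T.carrier
  t_addl : ∀ m m' x, t (m + m') x = t m x + t m' x
  t_addr : ∀ m x x', t m (x + x') = t m x + t m x'
  t_rsml : ∀ (r : R) m x, t (r • m) x = r • t m x
  t_rsmr : ∀ (r : R) m x, t m (r • x) = r • t m x
  t_smul : ∀ m x b, t m (X.smul x b) = T.smul (t m x) b
  t_bal : ∀ {i j : ℤ} (m : N.carrier) (x : X.carrier) (b : P.B.carrier),
    b ∈ P.B.gr i → x ∈ X.gr j →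
    t (N.smul m b) x = sgn (i * j) • t m (X.smul x b)
  t_gr : ∀ {i j : ℤ} {m x}, m ∈ N.gr i → x ∈ X.gr j → t m x ∈ T.gr (i + j)
  t_d : ∀ {i : ℤ} (m x), m ∈ N.gr i → T.d (t m x) = t (N.d m) x + sgn i • t m (X.d x)
  span : ∀ y : T.carrier, y ∈ Submodule.span R {z : T.carrier | ∃ m x, z = t m x}
  univ : ∀ (Q : Type u) [AddCommGroup Q] [Module R Q] (h : N.carrier → X.carrier → Q),
    (∀ m m' x, h (m + m') x = h m x + h m' x) →
    (∀ m x x', h m (x + x') = h m x + h m x') →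
    (∀ (r : R) m x, h (r • m) x = r • h m x) →
    (∀ (r : R) m x, h m (r • x) = r • h m x) →
    (∀ {i j : ℤ} (m x) (b : P.B.carrier), b ∈ P.B.gr i → x ∈ X.gr j →
      h (N.smul m b) x = sgn (i * j) • h m (X.smul x b)) →
    ∃! H : T.carrier →ₗ[R] Q, ∀ m x, H (t m x) = h m x

/-- `D : B → X` is an `A`-derivation of degree `n` with values in the DG `B`-module `X`. -/
def IsDerB (P : EnvSetup R) (X : DGMod P.B) (n : ℤ) (D : P.B.carrier → X.carrier) : Prop :=
  (∀ b c, D (b + c) = D b + D c) ∧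
  (∀ (r : R) b, D (r • b) = r • D b) ∧
  (∀ (b : P.B.carrier) (a : P.A.carrier),
    D (b * P.φ.toFun a) = X.smul (D b) (P.φ.toFun a)) ∧
  (∀ i : ℤ, ∀ b ∈ P.B.gr i, D b ∈ X.gr (i + n)) ∧
  (∀ (i j : ℤ) (b c : P.B.carrier), b ∈ P.B.gr i → c ∈ P.B.gr j →
    D (b * c) = X.smul (D b) c + sgn (i * j) • X.smul (D c) b)

/-- `D` belongs to `Der_A(B,X)` for a DG `B`-module `X`. -/
def InSDerB (P : EnvSetup R) (X : DGMod P.B) (D : P.B.carrier → X.carrier) : Prop :=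
  ∃ (s : Finset ℤ) (g : ℤ → P.B.carrier → X.carrier),
    (∀ n ∈ s, IsDerB P X n (g n)) ∧ ∀ b, D b = ∑ n ∈ s, g n b

/-- `ψ : N → N ⊗_B X` is a `D`-connection on `N` along the DG `B`-module `X`. -/
def IsConnB {P : EnvSetup R} {N X : DGMod P.B} (τ : TensorBB P N X)
    (n : ℤ) (D : P.B.carrier → X.carrier) (ψ : N.carrier → τ.T.carrier) : Prop :=
  (∀ x y : N.carrier, ψ (x + y) = ψ x + ψ y) ∧
  (∀ (r : R) (x : N.carrier), ψ (r • x) = r • ψ x) ∧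
  (∀ i : ℤ, ∀ x ∈ N.gr i, ψ x ∈ τ.T.gr (i + n)) ∧
  (∀ (i : ℤ) (x : N.carrier) (b : P.B.carrier), x ∈ N.gr i →
    ψ (N.smul x b) = τ.T.smul (ψ x) b + sgn (n * i) • τ.t x (D b))

/-- A `Der_A(B,X)`-connection on `N` along a DG `B`-module `X` (equivalently, a DG
`B`-module splitting of `ν : Conn(N, N ⊗_B X) → Der_A(B,X)`). -/
def IsLConnB {P : EnvSetup R} {N X : DGMod P.B} (τ : TensorBB P N X)
    (Cn : (P.B.carrier → X.carrier) → N.carrier → τ.T.carrier) : Prop :=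
  (∀ (n : ℤ) (D), IsDerB P X n D → IsConnB τ n D (Cn D)) ∧
  (∀ D D', InSDerB P X D → InSDerB P X D' →
    ∀ x, Cn (fun b => D b + D' b) x = Cn D x + Cn D' x) ∧
  (∀ (r : R) (D), InSDerB P X D → ∀ x, Cn (fun b => r • D b) x = r • Cn D x) ∧
  (∀ (k n : ℤ) (b : P.B.carrier) (D), b ∈ P.B.gr k → IsDerB P X n D →
    ∀ x, Cn (fun c => X.lsmul b (D c)) x = τ.T.lsmul b (Cn D x)) ∧
  (∀ (n : ℤ) (D), IsDerB P X n D →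
    ∀ x, Cn (fun b => X.d (D b) - sgn n • D (P.B.d b)) x
      = τ.T.d (Cn D x) - sgn n • Cn D (N.d x))

/-- `D : B → B` is an `A`-derivation of `B` of degree `n` (an element of
`Der_A(B) = Der_A(B,B)`). -/
def IsDerSelf (P : EnvSetup R) (n : ℤ) (D : P.B.carrier → P.B.carrier) : Prop :=
  (∀ b c, D (b + c) = D b + D c) ∧
  (∀ (r : R) b, D (r • b) = r • D b) ∧
  (∀ (b : P.B.carrier) (a : P.A.carrier), D (b * P.φ.toFun a) = D b * P.φ.toFun a) ∧
  (∀ i : ℤ, ∀ b ∈ P.B.gr i, D b ∈ P.B.gr (i + n)) ∧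
  (∀ (i j : ℤ) (b c : P.B.carrier), b ∈ P.B.gr i → c ∈ P.B.gr j →
    D (b * c) = D b * c + sgn (i * j) • (D c * b))

/-- `D` belongs to `Der_A(B) = ⊕_{n ∈ ℤ} Der_A(B)_n`. -/
def InSDerSelf (P : EnvSetup R) (D : P.B.carrier → P.B.carrier) : Prop :=
  ∃ (s : Finset ℤ) (g : ℤ → P.B.carrier → P.B.carrier),
    (∀ n ∈ s, IsDerSelf P n (g n)) ∧ ∀ b, D b = ∑ n ∈ s, g n b

/-- `ψ : N → N` is a `D`-connection on `N` along `B` (identifying `N ⊗_B B ≅ N`):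
`ψ(xb) = ψ(x)b + (-1)^{|D||x|} x D(b)`. -/
def IsConnSelf (P : EnvSetup R) (N : DGMod P.B) (n : ℤ)
    (D : P.B.carrier → P.B.carrier) (ψ : N.carrier → N.carrier) : Prop :=
  (∀ x y : N.carrier, ψ (x + y) = ψ x + ψ y) ∧
  (∀ (r : R) (x : N.carrier), ψ (r • x) = r • ψ x) ∧
  (∀ i : ℤ, ∀ x ∈ N.gr i, ψ x ∈ N.gr (i + n)) ∧
  (∀ (i : ℤ) (x : N.carrier) (b : P.B.carrier), x ∈ N.gr i →
    ψ (N.smul x b) = N.smul (ψ x) b + sgn (n * i) • N.smul x (D b))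

/-- A `Der_A(B)`-connection on `N` (along `B`). -/
def IsLConnSelf (P : EnvSetup R) (N : DGMod P.B)
    (Cn : (P.B.carrier → P.B.carrier) → N.carrier → N.carrier) : Prop :=
  (∀ (n : ℤ) (D), IsDerSelf P n D → IsConnSelf P N n D (Cn D)) ∧
  (∀ D D', InSDerSelf P D → InSDerSelf P D' →
    ∀ x, Cn (fun b => D b + D' b) x = Cn D x + Cn D' x) ∧
  (∀ (r : R) (D), InSDerSelf P D → ∀ x, Cn (fun b => r • D b) x = r • Cn D x) ∧
  (∀ (k n : ℤ) (b : P.B.carrier) (D), b ∈ P.B.gr k → IsDerSelf P n D →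
    ∀ x, Cn (fun c => b * D c) x = N.lsmul b (Cn D x)) ∧
  (∀ (n : ℤ) (D), IsDerSelf P n D →
    ∀ x, Cn (fun b => P.B.d (D b) - sgn n • D (P.B.d b)) x
      = N.d (Cn D x) - sgn n • Cn D (N.d x))

/-- The trivial `D`-connection `φ(D)` on a graded-free DG `B`-module `N` with
homogeneous basis `e` (of degrees `deg`), along a DG `Bᵉ`-module `X`:
`φ(D)(Σ e_λ b_λ) = Σ (-1)^{|D||e_λ|} e_λ ⊗ D(b_λ)`. -/
noncomputable def trivConn {P : EnvSetup R} {N : DGMod P.B} {X : DGMod P.E}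
    (τ : TensorBX P N X) {ι : Type u} (e : ι → N.carrier) (deg : ι → ℤ)
    (hb : Function.Bijective fun c : ι →₀ P.B.carrier => c.sum fun l b => N.smul (e l) b)
    (n : ℤ) (D : P.B.carrier → X.carrier) : N.carrier → τ.T.carrier :=
  fun x => ((Equiv.ofBijective _ hb).symm x).sum fun l b => sgn (n * deg l) • τ.t (e l) (D b)

/-- The trivial `D`-connection on a graded-free DG `B`-module `N` along `B`
(identifying `N ⊗_B B ≅ N`). -/
noncomputable def trivConnSelf {P : EnvSetup R} (N : DGMod P.B) {ι : Type u}
    (e : ι → N.carrier) (deg : ι → ℤ)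
    (hb : Function.Bijective fun c : ι →₀ P.B.carrier => c.sum fun l b => N.smul (e l) b)
    (n : ℤ) (D : P.B.carrier → P.B.carrier) : N.carrier → N.carrier :=
  fun x => ((Equiv.ofBijective _ hb).symm x).sum fun l b => sgn (n * deg l) • N.smul (e l) (D b)

/-- The Atiyah homomorphism `α : N → N ⊗_B J(-1)` of a semifree DG `B`-module `N` with
semifree basis `e` and structure coefficients `cf` (`∂(e_λ) = Σ_μ e_μ (cf λ)_μ`):
the `B`-linear map with `α(e_λ) = Σ_μ e_μ ⊗ δ((cf λ)_μ)`. -/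
noncomputable def atiyah {P : EnvSetup R} {N : DGMod P.B} (τ : TensorBX P N P.J)
    {ι : Type u} (e : ι → N.carrier)
    (hb : Function.Bijective fun c : ι →₀ P.B.carrier => c.sum fun l b => N.smul (e l) b)
    (cf : ι → ι →₀ P.B.carrier) : N.carrier → τ.T.carrier :=
  fun x => ((Equiv.ofBijective _ hb).symm x).sum fun l b =>
    τ.T.smul ((cf l).sum fun m b' => τ.t (e m) (P.δ b')) b

/-- The classical Atiyah map `ᾱ : N → N ⊗_B Ω(-1)` (or more generally the analogue of the
Atiyah homomorphism along a DG `B`-module `X` with respect to a derivation-like map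
`D0 : B → X`): the `B`-linear map with `ᾱ(e_λ) = Σ_μ e_μ ⊗ D0((cf λ)_μ)`. -/
noncomputable def atiyahB {P : EnvSetup R} {N X : DGMod P.B} (τ : TensorBB P N X)
    {ι : Type u} (e : ι → N.carrier)
    (hb : Function.Bijective fun c : ι →₀ P.B.carrier => c.sum fun l b => N.smul (e l) b)
    (cf : ι → ι →₀ P.B.carrier) (D0 : P.B.carrier → X.carrier) : N.carrier → τ.T.carrier :=
  fun x => ((Equiv.ofBijective _ hb).symm x).sum fun l b =>
    τ.T.smul ((cf l).sum fun m b' => τ.t (e m) (D0 b')) b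

/-- The Kodaira–Spencer homomorphism `κ(D) = [∂^N, φ(D)] - φ([d^B, D])` on a graded-free
DG `B`-module `N` with respect to the homogeneous basis `e`. -/
noncomputable def kappa {P : EnvSetup R} (N : DGMod P.B) {ι : Type u}
    (e : ι → N.carrier) (deg : ι → ℤ)
    (hb : Function.Bijective fun c : ι →₀ P.B.carrier => c.sum fun l b => N.smul (e l) b)
    (n : ℤ) (D : P.B.carrier → P.B.carrier) : N.carrier → N.carrier :=
  fun x =>
    (N.d (trivConnSelf N e deg hb n D x) - sgn n • trivConnSelf N e deg hb n D (N.d x))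
      - trivConnSelf N e deg hb (n - 1) (fun b => P.B.d (D b) - sgn n • D (P.B.d b)) x

/-- The setup of the paper enriched with the differential module
`Ω = Ω_A(B) = J/J²` of `B` over `A`, a DG `B`-module with the natural
projection `pOm : J → Ω` whose kernel is `J²`. -/
structure OmegaSetup (R : Type u) [CommRing R] : Type (u + 1) where
  env : EnvSetup R
  Ω : DGMod env.B
  pOm : env.J.carrier → Ω.carrier
  pOm_add : ∀ x y, pOm (x + y) = pOm x + pOm y
  pOm_rsmul : ∀ (r : R) x, pOm (r • x) = r • pOm x
  pOm_surj : Function.Surjective pOm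
  pOm_gr : ∀ {i : ℤ} {x}, x ∈ env.J.gr i → pOm x ∈ Ω.gr i
  pOm_d : ∀ x, pOm (env.J.d x) = Ω.d (pOm x)
  pOm_smul : ∀ x ee, pOm (env.J.smul x ee) = Ω.smul (pOm x) (env.mulB.toFun ee)
  pOm_ker : ∀ x, pOm x = 0 ↔
    env.ιJ x ∈ Submodule.span R
      {y : env.E.carrier | ∃ u v : env.J.carrier, y = env.ιJ u * env.ιJ v}

/-- The universal derivation `δ̄ : B → Ω = J/J²` induced by `δ`. -/
def OmegaSetup.δbar (Q : OmegaSetup R) : Q.env.B.carrier → Q.Ω.carrier :=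
  fun b => Q.pOm (Q.env.δ b)

end DG


namespace DG

universe u

/-!
Write an element of `Ω` in the semifree basis as `x = Σ_μ u_μ c_μ`; the dual functionals read off
its coordinates, `h_λ(x) = c_λ`, which is (b) for `x = δ̄(b)`. Applying `h_λ` to the Leibniz rule
`∂(u_μ c) = ∂(u_μ) c + (-1)^{|u_μ|} u_μ d(c)` gives
`h_λ(∂x) = Σ_μ c_{λμ} h_μ(x) + (-1)^{|u_λ|} d(h_λ(x))`, and since `∂ δ̄ = δ̄ d`, taking `x = δ̄(b)`
and rearranging gives (a). All sums are finite because `δ̄(b)` has finitely many nonzero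
coordinates.
-/

section DualBasis

variable {R : Type u} [CommRing R]

theorem sgn_mul_self (n : ℤ) : sgn n * sgn n = 1 := by
  rw [sgn, ← Units.val_mul, Int.units_mul_self, Units.val_one]

theorem sgn_neg (n : ℤ) : sgn (-n) = sgn n := by
  rw [sgn, zpow_neg, Int.units_inv_eq_self, sgn]

theorem sgn_add_one (n : ℤ) : sgn (n + 1) = -sgn n := by
  rw [sgn, zpow_add_one, Units.val_mul, sgn]
  simp

theorem DGMod.smul_zero {S : DGAlg R} (M : DGMod S) (x : M.carrier) : M.smul x 0 = 0 := by
  simpa using M.smul_add x 0 0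

def DGMod.linComb {S : DGAlg R} (M : DGMod S) {ι : Type*} (u : ι → M.carrier)
    (c : ι →₀ S.carrier) : M.carrier :=
  c.sum fun l b => M.smul (u l) b

namespace IsGLin

variable {S : DGAlg R} {M : DGMod S} {n : ℤ} {f : M.carrier → S.carrier}

def toAddMonoidHom (hf : IsGLin M S.toSelfMod n f) : M.carrier →+ S.carrier :=
  AddMonoidHom.mk' f hf.1

theorem map_add (hf : IsGLin M S.toSelfMod n f) (x y : M.carrier) : f (x + y) = f x + f y :=
  hf.1 x y

theorem map_zsmul (hf : IsGLin M S.toSelfMod n f) (k : ℤ) (x : M.carrier) :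
    f (k • x) = k • f x :=
  _root_.map_zsmul hf.toAddMonoidHom k x

theorem map_finsuppSum (hf : IsGLin M S.toSelfMod n f) {ι A : Type*} [Zero A] (c : ι →₀ A)
    (g : ι → A → M.carrier) : f (c.sum g) = c.sum fun i a => f (g i a) :=
  _root_.map_finsuppSum hf.toAddMonoidHom c g

theorem map_smul (hf : IsGLin M S.toSelfMod n f) (x : M.carrier) (a : S.carrier) :
    f (M.smul x a) = f x * a :=
  hf.2.2.1 x a

end IsGLin

theorem finsum_eq_finsuppSum {ι A B : Type*} [Zero A] [AddCommMonoid B] (c : ι →₀ A)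
    (g : ι → A → B) (hg : ∀ i, g i 0 = 0) : ∑ᶠ i, g i (c i) = c.sum g :=
  finsum_eq_sum_of_support_subset _ fun i hi => by
    by_contra hc
    exact hi (show g i (c i) = 0 by rw [Finsupp.notMem_support_iff.mp hc, hg])

variable {S : DGAlg R} {M : DGMod S} {ι : Type*} [DecidableEq ι] {u : ι → M.carrier}
  {h : ι → M.carrier → S.carrier} {k : ι → ℤ}

theorem dual_linComb (hglin : ∀ l, IsGLin M S.toSelfMod (k l) (h l))
    (hdual : ∀ l m, h l (u m) = if l = m then 1 else 0) (l : ι) (c : ι →₀ S.carrier) :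
    h l (M.linComb u c) = c l := by
  simp only [DGMod.linComb, (hglin l).map_finsuppSum, (hglin l).map_smul, hdual, ite_mul,
    one_mul, zero_mul]
  exact Finsupp.sum_ite_self_eq c l

theorem eq_finsum_smul_dual (hglin : ∀ l, IsGLin M S.toSelfMod (k l) (h l))
    (hdual : ∀ l m, h l (u m) = if l = m then 1 else 0)
    (hspan : ∀ x, ∃ c, M.linComb u c = x) (x : M.carrier) :
    x = ∑ᶠ l, M.smul (u l) (h l x) := by
  obtain ⟨c, rfl⟩ := hspan x
  simp only [dual_linComb hglin hdual]
  exact (finsum_eq_finsuppSum c _ fun l => M.smul_zero (u l)).symm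

variable {deg : ι → ℤ} {cf : ι → ι →₀ S.carrier}

theorem dual_d_smul (hmem : ∀ l, u l ∈ M.gr (deg l))
    (hglin : ∀ l, IsGLin M S.toSelfMod (k l) (h l))
    (hdual : ∀ l m, h l (u m) = if l = m then 1 else 0)
    (hdO : ∀ l, M.d (u l) = M.linComb u (cf l)) (l m : ι) (b : S.carrier) :
    h l (M.d (M.smul (u m) b)) = cf m l * b + if l = m then sgn (deg m) • S.d b else 0 := by
  rw [M.leibniz b (hmem m), (hglin l).map_add, hdO, (hglin l).map_smul,
    dual_linComb hglin hdual, (hglin l).map_zsmul, (hglin l).map_smul, hdual]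
  split_ifs <;> simp

theorem dual_d (hmem : ∀ l, u l ∈ M.gr (deg l))
    (hglin : ∀ l, IsGLin M S.toSelfMod (k l) (h l))
    (hdual : ∀ l m, h l (u m) = if l = m then 1 else 0)
    (hdO : ∀ l, M.d (u l) = M.linComb u (cf l))
    (hspan : ∀ x, ∃ c, M.linComb u c = x) (l : ι) (x : M.carrier) :
    h l (M.d x) = ∑ᶠ m, cf m l * h m x + sgn (deg l) • S.d (h l x) := by
  obtain ⟨c, rfl⟩ := hspan x
  simp only [dual_linComb hglin hdual]
  rw [DGMod.linComb, map_finsuppSum, (hglin l).map_finsuppSum]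
  simp only [dual_d_smul hmem hglin hdual hdO, Finsupp.sum_add, Finsupp.sum_ite_eq]
  rw [finsum_eq_finsuppSum c (fun m b => cf m l * b) fun m => mul_zero _]
  by_cases hl : l ∈ c.support
  · rw [if_pos hl]
  · rw [if_neg hl, Finsupp.notMem_support_iff.mp hl, map_zero, smul_zero]

end DualBasis

theorem OmegaSetup.d_δbar {R : Type u} [CommRing R] (Q : OmegaSetup R) (b : Q.env.B.carrier) :
    Q.Ω.d (Q.δbar b) = Q.δbar (Q.env.B.d b) := by
  rw [OmegaSetup.δbar, OmegaSetup.δbar, ← Q.pOm_d]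
  congr 1
  apply Q.env.ιJ_inj
  rw [Q.env.ιJ_d, Q.env.ιJ_δ, Q.env.ιJ_δ, map_sub, ← Q.env.inl.map_d, ← Q.env.inr.map_d]

theorem dual_derivations_of_semifree_differential_module_general {R : Type u} [CommRing R]
    (Q : OmegaSetup R) {ι : Type u} [LinearOrder ι]
    (u : ι → Q.Ω.carrier) (deg : ι → ℤ) (hmem : ∀ l, u l ∈ Q.Ω.gr (deg l))
    (hb : Function.Bijective fun c : ι →₀ Q.env.B.carrier =>
      c.sum fun l b => Q.Ω.smul (u l) b)
    (cf : ι → ι →₀ Q.env.B.carrier)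
    (hdO : ∀ l, Q.Ω.d (u l) = (cf l).sum fun m b => Q.Ω.smul (u m) b)
    -- the dual basis h_λ = g(∂_λ) ∈ Hom_B(Ω, B)
    (h : ι → (Q.Ω.carrier → Q.env.B.carrier))
    (hglin : ∀ l, IsGLin Q.Ω Q.env.B.toSelfMod (-(deg l)) (h l))
    (hdual : ∀ l m, h l (u m) = if l = m then (1 : Q.env.B.carrier) else 0) :
    -- (a) ∂^Der(∂_λ) = (-1)^{|u_λ|+1} Σ_{υ>λ} c_{λυ} ∂_υ
    (∀ (l : ι) (b : Q.env.B.carrier),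
      Q.env.B.d (h l (Q.δbar b)) - sgn (-(deg l)) • h l (Q.δbar (Q.env.B.d b))
        = sgn (deg l + 1) • ∑ᶠ v : ι, (cf v) l * h v (Q.δbar b)) ∧
    -- (b) δ̄(b) = Σ_λ u_λ ∂_λ(b)
    (∀ b : Q.env.B.carrier,
      Q.δbar b = ∑ᶠ l : ι, Q.Ω.smul (u l) (h l (Q.δbar b))) := by
  have hspan : ∀ x, ∃ c, Q.Ω.linComb u c = x := hb.2
  refine ⟨fun l b => ?_, fun b => eq_finsum_smul_dual hglin hdual hspan _⟩
  rw [← Q.d_δbar, dual_d hmem hglin hdual hdO hspan, sgn_neg, sgn_add_one, smul_add, smul_smul,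
    sgn_mul_self, one_smul, neg_smul]
  abel

/-- Assume `A → B` has semifree differential module, with semifree
basis `{u_λ}` of `Ω = J/J²` and structure constants `c_{μλ}`
(`∂^Ω(u_λ) = Σ_{μ<λ} u_μ c_{μλ}`), and let `∂_λ = h_λ ∘ δ̄ ∈ Der_A(B)` be the dual
derivations determined by `g(∂_λ)(u_μ) = δ_{λμ}` under `g : Der_A(B) ≅ Hom_B(Ω,B)`.
Then (a) `∂^Der(∂_λ) = (-1)^{|u_λ|+1} Σ_{υ>λ} c_{λυ} ∂_υ` (a convergent, pointwise
finitely supported, sum), and (b) `δ̄(b) = Σ_λ u_λ ∂_λ(b)` (a finite sum) for every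
`b ∈ B`. -/
theorem dual_derivations_of_semifree_differential_module {R : Type u} [CommRing R]
    (Q : OmegaSetup R) {ι : Type u} [LinearOrder ι] [WellFoundedLT ι]
    (u : ι → Q.Ω.carrier) (deg : ι → ℤ) (hmem : ∀ l, u l ∈ Q.Ω.gr (deg l))
    (hb : Function.Bijective fun c : ι →₀ Q.env.B.carrier =>
      c.sum fun l b => Q.Ω.smul (u l) b)
    (cf : ι → ι →₀ Q.env.B.carrier) (hsupp : ∀ l m, m ∈ (cf l).support → m < l)
    (hdO : ∀ l, Q.Ω.d (u l) = (cf l).sum fun m b => Q.Ω.smul (u m) b)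
    (hfin : ∀ n : ℤ, {l : ι | deg l = n}.Finite)
    -- the dual basis h_λ = g(∂_λ) ∈ Hom_B(Ω, B)
    (h : ι → (Q.Ω.carrier → Q.env.B.carrier))
    (hglin : ∀ l, IsGLin Q.Ω Q.env.B.toSelfMod (-(deg l)) (h l))
    (hdual : ∀ l m, h l (u m) = if l = m then (1 : Q.env.B.carrier) else 0) :
    -- (a) ∂^Der(∂_λ) = (-1)^{|u_λ|+1} Σ_{υ>λ} c_{λυ} ∂_υ
    (∀ (l : ι) (b : Q.env.B.carrier),
      Q.env.B.d (h l (Q.δbar b)) - sgn (-(deg l)) • h l (Q.δbar (Q.env.B.d b))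
        = sgn (deg l + 1) • ∑ᶠ v : ι, (cf v) l * h v (Q.δbar b)) ∧
    -- (b) δ̄(b) = Σ_λ u_λ ∂_λ(b)
    (∀ b : Q.env.B.carrier,
      Q.δbar b = ∑ᶠ l : ι, Q.Ω.smul (u l) (h l (Q.δbar b))) :=
  dual_derivations_of_semifree_differential_module_general Q u deg hmem hb cf hdO h hglin hdual

end DG
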